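/- arXiv:1009.4144 — 4 statements merged into one kernel-verified Lean document; each statement's English description precedes it below -/
import Mathlib

section
/- Let H be a reproducing kernel Hilbert space of functions X → ℂ with kernel L. A function f: X → ℂ lies in the closed unit ball of H if and only if the kernel L(x,y) − f(x)·conj(f(y)) is positive semi-definite on X. -/
/-!
The quadratic form of `L(x, y) - g x * conj (g y)` at coefficients `c` at points `x` is
`‖∑ cᵢ • k xᵢ‖² - ‖∑ cᵢ * conj (g xᵢ)‖²`, so positivity says exactly that
`∑ cᵢ • k xᵢ ↦ ∑ cᵢ * conj (g xᵢ)` is a well-defined functional of norm at most `1` on the span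
of the kernel functions. For `g = ⟪k ·, f⟫` this functional is `⟪f, ·⟫`; conversely, Hahn–Banach
extends it to all of `H`, and its Riesz representative `f` lies in the unit ball and reproduces `g`.
-/

open ComplexConjugate ComplexOrder

def IsPSDKernel {X : Type*} (K : X → X → ℂ) : Prop :=
  ∀ (n : ℕ) (x : Fin n → X) (c : Fin n → ℂ),
    0 ≤ ∑ i, ∑ j, conj (c i) * c j * K (x i) (x j)

theorem Finsupp.sum_eq_sum_fin {α R M : Type*} [Zero R] [AddCommMonoid M] (c : α →₀ R)
    (φ : α → R → M) :
    c.sum φ = ∑ i, φ (c.support.equivFin.symm i) (c (c.support.equivFin.symm i)) := by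
  rw [Finsupp.sum, ← Finset.sum_coe_sort]
  exact (Equiv.sum_comp c.support.equivFin.symm _).symm

theorem sum_sum_conj_mul_inner {𝕜 E ι : Type*} [RCLike 𝕜] [SeminormedAddCommGroup E]
    [InnerProductSpace 𝕜 E] [Fintype ι] (c : ι → 𝕜) (v : ι → E) :
    ∑ i, ∑ j, conj (c i) * c j * inner 𝕜 (v i) (v j) =
      inner 𝕜 (∑ i, c i • v i) (∑ j, c j • v j) := by
  simp_rw [sum_inner, inner_sum, inner_smul_left, inner_smul_right, mul_assoc]

theorem isPSDKernel_inner_sub_mul_conj_iff {X H : Type*} [NormedAddCommGroup H]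
    [InnerProductSpace ℂ H] (k : X → H) (g : X → ℂ) :
    IsPSDKernel (fun x y => (inner ℂ (k x) (k y) : ℂ) - g x * conj (g y)) ↔
      ∀ (n : ℕ) (x : Fin n → X) (c : Fin n → ℂ),
        ‖∑ i, c i * conj (g (x i))‖ ≤ ‖∑ i, c i • k (x i)‖ := by
  refine forall₃_congr fun n x c => ?_
  -- `g x * conj (g y)` is the Gram kernel of `conj ∘ g` in the Hilbert space `ℂ`.
  have hrank_one : ∀ i j,
      g (x i) * conj (g (x j)) = inner ℂ (conj (g (x i))) (conj (g (x j))) := fun i j => by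
    simp [mul_comm]
  simp_rw [mul_sub, Finset.sum_sub_distrib, hrank_one, sum_sum_conj_mul_inner,
    inner_self_eq_norm_sq_to_K, smul_eq_mul]
  norm_cast
  rw [RCLike.ofReal_nonneg, sub_nonneg, sq_le_sq₀ (norm_nonneg _) (norm_nonneg _)]

theorem LinearMap.exists_norm_le_one_comp_eq_of_norm_le {𝕜 M E : Type*} [RCLike 𝕜]
    [AddCommGroup M] [Module 𝕜 M] [NormedAddCommGroup E] [NormedSpace 𝕜 E]
    (P : M →ₗ[𝕜] E) (S : M →ₗ[𝕜] 𝕜) (h : ∀ m, ‖S m‖ ≤ ‖P m‖) :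
    ∃ ℓ : StrongDual 𝕜 E, ‖ℓ‖ ≤ 1 ∧ ∀ m, ℓ (P m) = S m := by
  have hker : LinearMap.ker P ≤ LinearMap.ker S := fun m hm =>
    norm_le_zero_iff.mp ((h m).trans_eq (by rw [hm, norm_zero]))
  let ℓ₀ : LinearMap.range P →ₗ[𝕜] 𝕜 :=
    ((LinearMap.ker P).liftQ S hker).comp (LinearMap.quotKerEquivRange P).symm.toLinearMap
  have hℓ₀ : ∀ m, ℓ₀ (P.rangeRestrict m) = S m := fun m => by
    have hm : P.rangeRestrict m = ⟨P m, P.mem_range_self m⟩ := rfl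
    simp [ℓ₀, hm, LinearMap.quotKerEquivRange_symm_apply_image]
  have hℓ₀_le : ∀ v, ‖ℓ₀ v‖ ≤ 1 * ‖v‖ := by
    intro v
    obtain ⟨m, rfl⟩ := P.surjective_rangeRestrict v
    rw [one_mul, hℓ₀]
    exact h m
  obtain ⟨ℓ, hℓ_ext, hℓ_norm⟩ := exists_extension_norm_eq _ (ℓ₀.mkContinuous 1 hℓ₀_le)
  refine ⟨ℓ, hℓ_norm ▸ LinearMap.mkContinuous_norm_le _ zero_le_one _, fun m => ?_⟩
  exact (hℓ_ext (P.rangeRestrict m)).trans (hℓ₀ m)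

theorem LinearMap.exists_norm_le_one_inner_eq_of_norm_le {𝕜 M H : Type*} [RCLike 𝕜]
    [AddCommGroup M] [Module 𝕜 M] [NormedAddCommGroup H] [InnerProductSpace 𝕜 H]
    [CompleteSpace H]
    (P : M →ₗ[𝕜] H) (S : M →ₗ[𝕜] 𝕜) (h : ∀ m, ‖S m‖ ≤ ‖P m‖) :
    ∃ f : H, ‖f‖ ≤ 1 ∧ ∀ m, inner 𝕜 f (P m) = S m := by
  obtain ⟨ℓ, hℓ, hℓP⟩ := P.exists_norm_le_one_comp_eq_of_norm_le S h
  refine ⟨(InnerProductSpace.toDual 𝕜 H).symm ℓ, by simpa using hℓ, fun m => ?_⟩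
  rw [InnerProductSpace.toDual_symm_apply, hℓP]

theorem mem_unit_ball_iff_kernel_psd_general {X H : Type*}
    [NormedAddCommGroup H] [InnerProductSpace ℂ H] [CompleteSpace H]
    (k : X → H)
    (g : X → ℂ) :
    (∃ f : H, ‖f‖ ≤ 1 ∧ ∀ x, g x = (inner ℂ (k x) f : ℂ)) ↔
      IsPSDKernel (fun x y => (inner ℂ (k x) (k y) : ℂ) - g x * conj (g y)) := by
  rw [isPSDKernel_inner_sub_mul_conj_iff]
  constructor
  · rintro ⟨f, hf, hg⟩ n x c
    calc ‖∑ i, c i * conj (g (x i))‖ = ‖inner ℂ f (∑ i, c i • k (x i))‖ := by simp [hg]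
      _ ≤ ‖f‖ * ‖∑ i, c i • k (x i)‖ := norm_inner_le_norm _ _
      _ ≤ ‖∑ i, c i • k (x i)‖ := mul_le_of_le_one_left (norm_nonneg _) hf
  · intro hbound
    obtain ⟨f, hf, hfk⟩ := (Finsupp.linearCombination ℂ k).exists_norm_le_one_inner_eq_of_norm_le
      (Finsupp.linearCombination ℂ (conj ∘ g)) fun c => by
        simp only [Finsupp.linearCombination_apply, Finsupp.sum_eq_sum_fin c]
        exact hbound _ _ _
    refine ⟨f, hf, fun x => ?_⟩
    have hfx : inner ℂ f (k x) = conj (g x) := by simpa using hfk (Finsupp.single x 1)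
    rw [← inner_conj_symm, hfx, Complex.conj_conj]

/-- In a reproducing kernel Hilbert space `H` with kernel `L(x,y) = ⟪k x, k y⟫`
(`k x` the kernel function at `x`, spanning a dense subspace), a function `g : X → ℂ`
lies in the closed unit ball of `H` if and only if `L(x,y) − g(x)·conj(g(y))` is a
positive semi-definite kernel. -/
theorem mem_unit_ball_iff_kernel_psd {X H : Type*}
    [NormedAddCommGroup H] [InnerProductSpace ℂ H] [CompleteSpace H]
    (k : X → H)
    (hdense : Dense ((Submodule.span ℂ (Set.range k) : Submodule ℂ H) : Set H))
    (g : X → ℂ) :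
    (∃ f : H, ‖f‖ ≤ 1 ∧ ∀ x, g x = (inner ℂ (k x) f : ℂ)) ↔
      IsPSDKernel (fun x y => (inner ℂ (k x) (k y) : ℂ) - g x * conj (g y)) :=
  mem_unit_ball_iff_kernel_psd_general k g
end

section
/- Define c_n = 1 − n^{-2} and h_n(z) = exp(−(1/n)·(1+c_n z)/(1−c_n z)) − exp(−(1/n)·(1+c_n)/(1−c_n)) for z in the closed unit disk. Then h_n is holomorphic on a neighborhood of the closed disk, h_n(1) = 0, ‖h_n‖_∞ ≤ 1 + o(1) as n → ∞, and h_n → 1 uniformly on compact subsets of the open disk 𝔻. -/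
/-!
Write `h_n(z) = g_n(z) - g_n(1)` with `g_n(z) = exp (-(1/n) (1 + c_n z)/(1 - c_n z))`.
The Cayley transform `w ↦ (1 + w)/(1 - w)` maps the closed unit disk into the closed right
half-plane, so `‖g_n‖ ≤ 1` on the disk, while `g_n(1) = exp (1/n - 2n) → 0`. On a compact
`K ⊆ ball 0 r` with `r < 1` the Cayley transform is bounded by `(1 + r)/(1 - r)`, so the
exponent of `g_n` is `O(1/n)` uniformly on `K` and `g_n → 1` uniformly there.
-/

/-- `c_n = 1 − 1/n²`. -/
noncomputable def cseq (n : ℕ) : ℂ := 1 - 1 / (n : ℂ) ^ 2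

/-- `h_n(z) = exp(−(1/n)(1+c_n z)/(1−c_n z)) − exp(−(1/n)(1+c_n)/(1−c_n))`. -/
noncomputable def hseq (n : ℕ) (z : ℂ) : ℂ :=
  Complex.exp (-(1 / (n : ℂ)) * ((1 + cseq n * z) / (1 - cseq n * z))) -
    Complex.exp (-(1 / (n : ℂ)) * ((1 + cseq n) / (1 - cseq n)))

open Filter Complex Metric Topology

lemma re_one_add_div_one_sub_nonneg {w : ℂ} (hw : ‖w‖ ≤ 1) :
    0 ≤ ((1 + w) / (1 - w)).re := by
  have hnormSq : normSq w ≤ 1 := by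
    rw [← Complex.sq_norm]; nlinarith [norm_nonneg w]
  rw [div_re, ← add_div]
  apply div_nonneg _ (normSq_nonneg _)
  simp only [add_re, sub_re, one_re, add_im, sub_im, one_im, normSq_apply] at hnormSq ⊢
  nlinarith

lemma norm_one_add_div_one_sub_le {w : ℂ} {r : ℝ} (hw : ‖w‖ ≤ r) (hr : r < 1) :
    ‖(1 + w) / (1 - w)‖ ≤ (1 + r) / (1 - r) := by
  have hnum : ‖1 + w‖ ≤ 1 + r := (norm_add_le _ _).trans (by simpa using hw)
  have hden : 1 - r ≤ ‖1 - w‖ := by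
    have := norm_sub_norm_le (1 : ℂ) w
    rw [norm_one] at this; linarith
  rw [norm_div]
  exact div_le_div₀ (by linarith [norm_nonneg w]) hnum (by linarith) hden

lemma norm_cexp_neg_mul_le_one {t : ℝ} (ht : 0 ≤ t) {u : ℂ} (hu : 0 ≤ u.re) :
    ‖exp (-t * u)‖ ≤ 1 := by
  rw [norm_exp, Real.exp_le_one_iff, ← ofReal_neg, re_ofReal_mul]
  nlinarith

section UniformConvergence

variable {ι α β : Type*} [PseudoMetricSpace β] {l : Filter ι} {s : Set α}

lemma tendstoUniformlyOn_of_dist_le {F : ι → α → β} {f : α → β} {b : ι → ℝ}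
    (hb : Tendsto b l (𝓝 0)) (h : ∀ᶠ n in l, ∀ x ∈ s, dist (f x) (F n x) ≤ b n) :
    TendstoUniformlyOn F f l s := by
  rw [Metric.tendstoUniformlyOn_iff]
  intro ε hε
  filter_upwards [h, hb.eventually (eventually_lt_nhds hε)] with n hn hbn x hx
  exact (hn x hx).trans_lt hbn

end UniformConvergence

lemma cseq_eq_ofReal (n : ℕ) : cseq n = ((1 - 1 / (n : ℝ) ^ 2 : ℝ) : ℂ) := by
  simp [cseq]

lemma norm_cseq_lt_one {n : ℕ} (hn : 1 ≤ n) : ‖cseq n‖ < 1 := by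
  have hn' : (1 : ℝ) ≤ n := by exact_mod_cast hn
  have hpos : 0 < 1 / (n : ℝ) ^ 2 := by positivity
  have hle : 1 / (n : ℝ) ^ 2 ≤ 1 := by rw [div_le_one (by positivity)]; nlinarith
  rw [cseq_eq_ofReal, norm_real, Real.norm_eq_abs, abs_lt]
  constructor <;> linarith

lemma norm_cseq_mul_le {n : ℕ} (hn : 1 ≤ n) (z : ℂ) : ‖cseq n * z‖ ≤ ‖z‖ := by
  rw [norm_mul]
  exact mul_le_of_le_one_left (norm_nonneg z) (norm_cseq_lt_one hn).le

lemma cseq_mul_ne_one {n : ℕ} (hn : 1 ≤ n) {z : ℂ} (hz : ‖z‖ ≤ 1) :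
    cseq n * z ≠ 1 := by
  have hlt : ‖cseq n * z‖ < 1 := by
    rw [norm_mul]
    exact mul_lt_one_of_nonneg_of_lt_one_left (norm_nonneg _) (norm_cseq_lt_one hn) hz
  exact ne_of_apply_ne norm (by rw [norm_one]; exact hlt.ne)

noncomputable def gseq (n : ℕ) (z : ℂ) : ℂ :=
  exp (-(1 / (n : ℂ)) * ((1 + cseq n * z) / (1 - cseq n * z)))

lemma hseq_eq_sub (n : ℕ) (z : ℂ) : hseq n z = gseq n z - gseq n 1 := by
  simp [hseq, gseq]

lemma differentiableOn_gseq (n : ℕ) : DifferentiableOn ℂ (gseq n) {z | cseq n * z ≠ 1} := by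
  intro z hz
  have : 1 - cseq n * z ≠ 0 := sub_ne_zero.2 (Ne.symm hz)
  unfold gseq
  fun_prop (disch := assumption)

lemma norm_gseq_le_one {n : ℕ} {z : ℂ} (hz : ‖cseq n * z‖ ≤ 1) :
    ‖gseq n z‖ ≤ 1 := by
  simpa [gseq] using
    norm_cexp_neg_mul_le_one (t := 1 / n) (by positivity) (re_one_add_div_one_sub_nonneg hz)

lemma gseq_one {n : ℕ} (hn : 1 ≤ n) : gseq n 1 = exp ((1 / n - 2 * n : ℝ) : ℂ) := by
  have hN : (n : ℂ) ≠ 0 := Nat.cast_ne_zero.mpr (by omega)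
  rw [gseq, mul_one]
  congr 1
  simp only [cseq]
  push_cast
  field_simp
  ring

lemma tendsto_norm_gseq_one : Tendsto (fun n => ‖gseq n 1‖) atTop (𝓝 0) := by
  have hexp : Tendsto (fun n : ℕ => 1 / (n : ℝ) - 2 * n) atTop atBot := by
    simp only [sub_eq_add_neg]
    exact tendsto_one_div_atTop_nhds_zero_nat.add_atBot
      (tendsto_neg_atTop_atBot.comp (tendsto_natCast_atTop_atTop.const_mul_atTop two_pos))
  refine (Real.tendsto_exp_atBot.comp hexp).congr' ?_
  filter_upwards [eventually_ge_atTop 1] with n hn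
  simp [gseq_one hn, norm_exp]

lemma tendstoUniformlyOn_gseq {K : Set ℂ} (hK : IsCompact K) (hK1 : K ⊆ ball 0 1) :
    TendstoUniformlyOn gseq (fun _ => 1) atTop K := by
  obtain ⟨r, hr, hKr⟩ := exists_lt_subset_ball hK.isClosed hK1
  set C := (1 + r) / (1 - r)
  have hb : Tendsto (fun n : ℕ => C / n) atTop (𝓝 0) := tendsto_const_div_atTop_nhds_zero_nat C
  refine tendstoUniformlyOn_of_dist_le (by simpa using hb.const_mul 2) ?_
  filter_upwards [eventually_ge_atTop 1, hb.eventually (eventually_le_nhds one_pos)]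
    with n hn hCn z hz
  have hcz : ‖cseq n * z‖ ≤ r :=
    (norm_cseq_mul_le hn z).trans (mem_ball_zero_iff.1 (hKr hz)).le
  have hw : ‖-(1 / (n : ℂ)) * ((1 + cseq n * z) / (1 - cseq n * z))‖ ≤ C / n := by
    rw [norm_mul, norm_neg, norm_div, norm_one, norm_natCast, one_div_mul_eq_div]
    gcongr
    exact norm_one_add_div_one_sub_le hcz hr
  rw [dist_comm, dist_eq_norm]
  exact (norm_exp_sub_one_le (hw.trans hCn)).trans (by gcongr)

/-- Each `h_n` is holomorphic on a neighborhood of the closed unit disk, vanishes at `1`,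
`‖h_n‖_∞ ≤ 1 + o(1)` as `n → ∞`, and `h_n → 1` uniformly on compact subsets of `𝔻`. -/
theorem hseq_properties :
    (∀ n : ℕ, 1 ≤ n → ∃ U : Set ℂ, IsOpen U ∧ Metric.closedBall (0 : ℂ) 1 ⊆ U ∧
        DifferentiableOn ℂ (hseq n) U) ∧
    (∀ n : ℕ, 1 ≤ n → hseq n 1 = 0) ∧
    (∃ ε : ℕ → ℝ, Filter.Tendsto ε Filter.atTop (nhds 0) ∧
        ∀ n : ℕ, 1 ≤ n → ∀ z ∈ Metric.ball (0 : ℂ) 1,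
          ‖hseq n z‖ ≤ 1 + ε n) ∧
    (∀ Kc : Set ℂ, Kc ⊆ Metric.ball (0 : ℂ) 1 → IsCompact Kc →
        TendstoUniformlyOn (fun n => hseq n) (fun _ => 1) Filter.atTop Kc) := by
  have hseq_fun : ∀ n, hseq n = fun z => gseq n z - gseq n 1 := fun n => funext (hseq_eq_sub n)
  refine ⟨fun n hn => ?_, fun n _ => by simp [hseq_eq_sub], ⟨fun n => ‖gseq n 1‖,
    tendsto_norm_gseq_one, fun n hn z hz => ?_⟩, fun K hK1 hK => ?_⟩
  · refine ⟨{z | cseq n * z ≠ 1}, isOpen_ne_fun (by fun_prop) continuous_const,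
      fun z hz => cseq_mul_ne_one hn (mem_closedBall_zero_iff.1 hz), ?_⟩
    rw [hseq_fun]
    exact (differentiableOn_gseq n).sub_const _
  · have hcz : ‖cseq n * z‖ ≤ 1 :=
      (norm_cseq_mul_le hn z).trans (mem_ball_zero_iff.1 hz).le
    rw [hseq_eq_sub]
    exact (norm_sub_le _ _).trans (by gcongr; exact norm_gseq_le_one hcz)
  · have hconst :=
      (tendsto_zero_iff_norm_tendsto_zero.2 tendsto_norm_gseq_one).tendstoUniformlyOn_const K
    simpa [hseq_fun] using (tendstoUniformlyOn_gseq hK hK1).fun_sub hconst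
end

section
/- There exists a sequence of functions g_n, each holomorphic in a neighborhood of the closed unit disk, bounded by 1 in modulus on the open disk, with g_n(1) = 0 for all n, and g_n → 1 uniformly on compact subsets of the open disk. -/
/-!
Take `g_n(z) = (1 - z) / (a_n - z)` with real `a_n ↓ 1`. The pole `a_n` lies outside the closed
disk, `|1 - z| ≤ |a_n - z|` on the half-plane `Re z ≤ 1`, and `1 - g_n(z) = (a_n - 1) / (a_n - z)`
is at most `(a_n - 1) / (1 - r)` on `|z| ≤ r < 1`.
-/

open Filter Metric Topology

noncomputable def peakingFun (a : ℝ) (z : ℂ) : ℂ := (1 - z) / (a - z)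

@[simp]
lemma peakingFun_one (a : ℝ) : peakingFun a 1 = 0 := by
  simp [peakingFun]

lemma differentiableOn_peakingFun (a : ℝ) : DifferentiableOn ℂ (peakingFun a) {z | z ≠ a} :=
  (differentiableOn_const 1 |>.sub differentiableOn_id).div
    (differentiableOn_const _ |>.sub differentiableOn_id) fun _ hz ↦ sub_ne_zero.2 (Ne.symm hz)

-- `‖a - z‖² - ‖1 - z‖² = (a - 1)(a + 1 - 2 Re z)`.
lemma norm_one_sub_le_norm_ofReal_sub {a : ℝ} (ha : 1 ≤ a) {z : ℂ} (hz : z.re ≤ 1) :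
    ‖1 - z‖ ≤ ‖(a : ℂ) - z‖ := by
  rw [Complex.norm_def, Complex.norm_def]
  gcongr
  simp only [Complex.normSq_apply, Complex.sub_re, Complex.sub_im, Complex.one_re,
    Complex.one_im, Complex.ofReal_re, Complex.ofReal_im]
  nlinarith

lemma norm_peakingFun_le_one {a : ℝ} (ha : 1 ≤ a) {z : ℂ} (hz : z.re ≤ 1) :
    ‖peakingFun a z‖ ≤ 1 := by
  rw [peakingFun, norm_div]
  exact div_le_one_of_le₀ (norm_one_sub_le_norm_ofReal_sub ha hz) (norm_nonneg _)

lemma dist_one_peakingFun_le {a r : ℝ} (ha : 1 ≤ a) (hr : r < 1) {z : ℂ} (hz : ‖z‖ ≤ r) :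
    dist 1 (peakingFun a z) ≤ (a - 1) / (1 - r) := by
  have hden : 1 - r ≤ ‖(a : ℂ) - z‖ := calc
    1 - r ≤ ‖(a : ℂ)‖ - ‖z‖ := by
      rw [Complex.norm_real, Real.norm_of_nonneg (by linarith)]; linarith
    _ ≤ ‖(a : ℂ) - z‖ := norm_sub_norm_le _ _
  have hne : (a : ℂ) - z ≠ 0 := norm_pos_iff.1 (by linarith)
  have hdiff : 1 - peakingFun a z = ((a - 1 : ℝ) : ℂ) / (a - z) := by
    rw [peakingFun]; field_simp; push_cast; ring
  rw [dist_eq_norm, hdiff, norm_div, Complex.norm_real, Real.norm_of_nonneg (by linarith)]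
  gcongr

lemma tendstoUniformlyOn_peakingFun {ι : Type*} {l : Filter ι} {a : ι → ℝ}
    (ha : ∀ i, 1 ≤ a i) (ha_lim : Tendsto a l (𝓝 1)) {r : ℝ} (hr : r < 1) :
    TendstoUniformlyOn (fun i ↦ peakingFun (a i)) (fun _ ↦ 1) l (closedBall 0 r) := by
  have hbound : Tendsto (fun i ↦ (a i - 1) / (1 - r)) l (𝓝 0) := by
    simpa using (ha_lim.sub_const 1).div_const (1 - r)
  rw [Metric.tendstoUniformlyOn_iff]
  intro ε hε
  filter_upwards [hbound.eventually_lt_const hε] with i hi z hz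
  exact (dist_one_peakingFun_le (ha i) hr (by simpa using hz)).trans_lt hi

/-- There is a sequence of functions `g_n`, each holomorphic on a neighborhood of the
closed unit disk, bounded by `1` in modulus on the open disk, with `g_n(1) = 0`, and
`g_n → 1` uniformly on compact subsets of the open disk. -/
theorem exists_peaking_sequence :
    ∃ g : ℕ → ℂ → ℂ,
      (∀ n : ℕ, ∃ U : Set ℂ, IsOpen U ∧ Metric.closedBall (0 : ℂ) 1 ⊆ U ∧
          DifferentiableOn ℂ (g n) U) ∧
      (∀ n : ℕ, ∀ z ∈ Metric.ball (0 : ℂ) 1, ‖g n z‖ ≤ 1) ∧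
      (∀ n : ℕ, g n 1 = 0) ∧
      (∀ Kc : Set ℂ, Kc ⊆ Metric.ball (0 : ℂ) 1 → IsCompact Kc →
          TendstoUniformlyOn g (fun _ => 1) Filter.atTop Kc) := by
  set a : ℕ → ℝ := fun n ↦ 1 + 1 / (n + 1)
  have ha_gt (n : ℕ) : 1 < a n := lt_add_of_pos_right 1 (by positivity)
  refine ⟨fun n ↦ peakingFun (a n), fun n ↦ ?_, fun n z hz ↦ ?_, fun n ↦ peakingFun_one _,
    fun K hK hKc ↦ ?_⟩
  · refine ⟨{z | z ≠ a n}, isOpen_ne, fun z hz hza ↦ ?_, differentiableOn_peakingFun _⟩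
    have : ‖((a n : ℝ) : ℂ)‖ ≤ 1 := by simpa [hza] using hz
    rw [Complex.norm_real, Real.norm_of_nonneg (by linarith [ha_gt n])] at this
    linarith [ha_gt n]
  · refine norm_peakingFun_le_one (ha_gt n).le ?_
    exact (Complex.re_le_norm z).trans (by simpa using (mem_ball_zero_iff.1 hz).le)
  · obtain ⟨r, hr, hKr⟩ := exists_lt_subset_ball hKc.isClosed hK
    have ha_lim : Tendsto a atTop (𝓝 1) := by
      simpa [a] using tendsto_one_div_add_atTop_nhds_zero_nat.const_add (1 : ℝ)
    exact (tendstoUniformlyOn_peakingFun (fun n ↦ (ha_gt n).le) ha_lim hr).mono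
      (hKr.trans ball_subset_closedBall)
end

section
/- Let K be a positive semi-definite M_α-valued kernel on a set V, u ∈ V, and γ ∈ ℂ^α with K(u,u)γ ≠ 0. Then the kernel K'(x,y) := ⟨K(u,u)γ, γ⟩·K(x,y) − K(x,u)γγ*K(u,y) is positive semi-definite on V. -/
open ComplexConjugate ComplexOrder Matrix

/-- A matrix-valued kernel is positive semi-definite if all finite block Gram matrices
are positive semi-definite. -/
def IsPSDMatKernel {V : Type*} {α : ℕ} (K : V → V → Matrix (Fin α) (Fin α) ℂ) : Prop :=
  ∀ (n : ℕ) (x : Fin n → V) (c : Fin n → (Fin α → ℂ)),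
    0 ≤ ∑ i, ∑ j, star (c i) ⬝ᵥ (K (x i) (x j)).mulVec (c j)

/-! A PSD kernel `K` is a semi-inner product on finitely supported `ℂ^α`-valued functions on `V`.
The Gram matrix of the two vectors `(x, c)` and `(u, γ)` is then positive semidefinite, so its
determinant `⟨u,u⟩⟨x,x⟩ - ⟨x,u⟩⟨u,x⟩` is nonnegative (Cauchy–Schwarz); this determinant is exactly
the quadratic form of `K'` at `(x, c)`. -/

theorem Matrix.posSemidef_of_forall_dotProduct_mulVec_nonneg {n : Type*} [Fintype n]
    [DecidableEq n] {M : Matrix n n ℂ} (hM : ∀ v, 0 ≤ star v ⬝ᵥ M *ᵥ v) : M.PosSemidef := by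
  rw [← isPositive_toEuclideanLin_iff, LinearMap.isPositive_iff_complex]
  intro v
  have hinner : v.ofLp ⬝ᵥ star (M *ᵥ v.ofLp) = star (star v.ofLp ⬝ᵥ M *ᵥ v.ofLp) := by
    rw [star_dotProduct, star_star, dotProduct_comm]
  have hreal := (hM v).isSelfAdjoint.star_eq
  simp only [toLpLin_apply, EuclideanSpace.inner_eq_star_dotProduct, hinner, hreal]
  exact ⟨Complex.conj_eq_iff_re.mp hreal, (Complex.nonneg_iff.mp (hM v)).1⟩

section KernelPairing

variable {V : Type*} {α : ℕ} (K : V → V → Matrix (Fin α) (Fin α) ℂ)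

def kernelPairing {m n : ℕ} (x : Fin m → V) (c : Fin m → Fin α → ℂ) (y : Fin n → V)
    (d : Fin n → Fin α → ℂ) : ℂ :=
  ∑ i, ∑ j, star (c i) ⬝ᵥ K (x i) (y j) *ᵥ d j

variable {K} {m n : ℕ} (x : Fin m → V) (c : Fin m → Fin α → ℂ) (y : Fin n → V)
    (d : Fin n → Fin α → ℂ)

theorem kernelPairing_smul_smul (s t : ℂ) :
    kernelPairing K x (s • c) y (t • d) = conj s * t * kernelPairing K x c y d := by
  simp only [kernelPairing, Finset.mul_sum, Pi.smul_apply, star_smul, mulVec_smul,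
    smul_dotProduct, dotProduct_smul, smul_eq_mul, Complex.star_def, mul_assoc, mul_left_comm t]

theorem kernelPairing_append_append :
    kernelPairing K (Fin.append x y) (Fin.append c d) (Fin.append x y) (Fin.append c d) =
      kernelPairing K x c x c + kernelPairing K x c y d + kernelPairing K y d x c +
        kernelPairing K y d y d := by
  simp only [kernelPairing, Fin.sum_univ_add, Fin.append_left, Fin.append_right,
    Finset.sum_add_distrib]
  abel

theorem IsPSDMatKernel.posSemidef_gram (hK : IsPSDMatKernel K) :
    (!![kernelPairing K x c x c, kernelPairing K x c y d;
        kernelPairing K y d x c, kernelPairing K y d y d]).PosSemidef := by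
  refine posSemidef_of_forall_dotProduct_mulVec_nonneg fun v => ?_
  have h := hK _ (Fin.append x y) (Fin.append (v 0 • c) (v 1 • d))
  rw [← kernelPairing, kernelPairing_append_append] at h
  simp only [kernelPairing_smul_smul] at h
  convert h using 1
  simp only [dotProduct, mulVec, Fin.sum_univ_two, Pi.star_apply, Complex.star_def, of_apply,
    cons_val', cons_val_fin_one, cons_val_zero, cons_val_one]
  ring

theorem IsPSDMatKernel.kernelPairing_mul_kernelPairing_le (hK : IsPSDMatKernel K) :
    kernelPairing K x c y d * kernelPairing K y d x c ≤
      kernelPairing K x c x c * kernelPairing K y d y d := by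
  simpa [det_fin_two_of, sub_nonneg] using (hK.posSemidef_gram x c y d).det_nonneg

end KernelPairing

theorem schur_complement_kernel_psd_general {V : Type*} {α : ℕ}
    (K : V → V → Matrix (Fin α) (Fin α) ℂ) (hK : IsPSDMatKernel K)
    (u : V) (γ : Fin α → ℂ) :
    IsPSDMatKernel (fun x y =>
      (star γ ⬝ᵥ (K u u).mulVec γ) • K x y -
        Matrix.vecMulVec ((K x u).mulVec γ) (Matrix.vecMul (star γ) (K u y))) := by
  intro n x c
  have hform : ∑ i, ∑ j, star (c i) ⬝ᵥ ((star γ ⬝ᵥ (K u u).mulVec γ) • K (x i) (x j) -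
        vecMulVec ((K (x i) u) *ᵥ γ) (star γ ᵥ* K u (x j))) *ᵥ c j =
      kernelPairing K x c x c * kernelPairing K ![u] ![γ] ![u] ![γ] -
        kernelPairing K x c ![u] ![γ] * kernelPairing K ![u] ![γ] x c := by
    simp only [kernelPairing, Fin.sum_univ_one, cons_val_zero, Finset.sum_mul,
      Finset.mul_sum, sub_mulVec, smul_mulVec, vecMulVec_mulVec, dotProduct_sub, dotProduct_smul,
      Finset.sum_sub_distrib, MulOpposite.smul_eq_mul_unop, MulOpposite.unop_op,
      smul_eq_mul, ← dotProduct_mulVec, mul_comm (star γ ⬝ᵥ K u u *ᵥ γ)]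
    exact congrArg _ Finset.sum_comm
  rw [hform, sub_nonneg]
  exact hK.kernelPairing_mul_kernelPairing_le x c ![u] ![γ]

/-- For a PSD `M_α`-valued kernel `K`, `u ∈ V` and `γ ∈ ℂ^α` with `K(u,u)γ ≠ 0`, the kernel
`K'(x,y) = ⟨K(u,u)γ,γ⟩·K(x,y) − K(x,u)γγ*K(u,y)` is positive semi-definite. -/
theorem schur_complement_kernel_psd {V : Type*} {α : ℕ}
    (K : V → V → Matrix (Fin α) (Fin α) ℂ) (hK : IsPSDMatKernel K)
    (u : V) (γ : Fin α → ℂ) (hγ : (K u u).mulVec γ ≠ 0) :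
    IsPSDMatKernel (fun x y =>
      (star γ ⬝ᵥ (K u u).mulVec γ) • K x y -
        Matrix.vecMulVec ((K x u).mulVec γ) (Matrix.vecMul (star γ) (K u y))) :=
  schur_complement_kernel_psd_general K hK u γ
end
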